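/- arXiv:1809.04353 — 4 statements merged into one kernel-verified Lean document; each statement's English description precedes it below -/
import Mathlib

section
/- Let u be a unitary operator on a Hilbert space H such that 1 - u is compact and -1 is not in the spectrum of u. Then for every t ∈ [0,1] the operator u_t = exp(t·log(u)) (defined via continuous functional calculus with the branch of log on U(1)∖{-1} taking values in i(-π,π)) satisfies: u_t is unitary and 1 - u_t is compact. -/
/-!
The spectrum of `u` lies on the unit circle and avoids `-1`, hence lies in the slit plane, where
`f z = exp (t * log z)` is holomorphic. Since `‖f‖ = 1` on the spectrum, `f u` is unitary; and
since `f 1 = 1`, `1 - f z = (1 - z) * g z` with `g = dslope f 1` continuous, whence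
`1 - f u = (1 - u) * g u` inherits compactness from `1 - u`.
-/

open Complex

section FunctionalCalculus

variable {𝕜 A : Type*} {p : A → Prop} [RCLike 𝕜] [TopologicalSpace A] [Ring A] [StarRing A]
  [Algebra 𝕜 A] [ContinuousFunctionalCalculus 𝕜 A p]

lemma cfc_sub_algebraMap_eq_mul_cfc_dslope (f : 𝕜 → 𝕜) (c : 𝕜) (a : A)
    (hf : ContinuousOn (dslope f c) (spectrum 𝕜 a)) (ha : p a := by cfc_tac) :
    cfc f a - algebraMap 𝕜 A (f c) = (a - algebraMap 𝕜 A c) * cfc (dslope f c) a := by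
  have hf_eq : f = fun z => (z - c) * dslope f c z + f c := by
    funext z; rw [← smul_eq_mul, sub_smul_dslope, sub_add_cancel]
  have hlin : ContinuousOn (fun z : 𝕜 => z - c) (spectrum 𝕜 a) := by fun_prop
  calc cfc f a - algebraMap 𝕜 A (f c)
      = cfc (fun z => (z - c) * dslope f c z + f c) a - algebraMap 𝕜 A (f c) := by
        rw [← hf_eq]
    _ = (a - algebraMap 𝕜 A c) * cfc (dslope f c) a := by
        rw [cfc_add_const (f c) (fun z => (z - c) * dslope f c z) a (hlin.mul hf),
          add_sub_cancel_right, cfc_mul _ _ a hlin hf,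
          cfc_sub _ _ a, cfc_id' 𝕜 a, cfc_const c a]

end FunctionalCalculus

lemma IsCompactOperator.one_sub_cfc {H : Type*} [NormedAddCommGroup H] [InnerProductSpace ℂ H]
    [CompleteSpace H] {u : H →L[ℂ] H} [IsStarNormal u] (hc : IsCompactOperator (⇑(1 - u)))
    {f : ℂ → ℂ} (hf1 : f 1 = 1) (hf : ContinuousOn (dslope f 1) (spectrum ℂ u)) :
    IsCompactOperator (⇑(1 - cfc f u)) := by
  have hfac : 1 - cfc f u = (1 - u) * cfc (dslope f 1) u := by
    have h := cfc_sub_algebraMap_eq_mul_cfc_dslope f 1 u hf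
    rw [hf1, map_one] at h
    rw [← neg_sub, h, ← neg_mul, neg_sub]
  rw [hfac]
  exact hc.comp_clm _

lemma norm_exp_ofReal_mul_log_of_norm_eq_one (t : ℝ) {z : ℂ} (hz : ‖z‖ = 1) :
    ‖exp (t * log z)‖ = 1 := by
  rw [norm_exp, re_ofReal_mul, log_re, hz, Real.log_one, mul_zero, Real.exp_zero]

lemma continuousOn_dslope_exp_mul_log (w : ℂ) :
    ContinuousOn (dslope (fun z => exp (w * log z)) 1) slitPlane := by
  have hdiff : DifferentiableOn ℂ (fun z => exp (w * log z)) slitPlane := fun z hz =>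
    (((differentiableAt_log hz).const_mul w).cexp).differentiableWithinAt
  have hnhds : slitPlane ∈ nhds (1 : ℂ) := isOpen_slitPlane.mem_nhds one_mem_slitPlane
  exact (continuousOn_dslope hnhds).2 ⟨hdiff.continuousOn, hdiff.differentiableAt hnhds⟩

/-- If `u` is unitary with `1 - u` compact and `-1 ∉ spectrum u`, then for every
`t ∈ [0,1]` the operator `u_t = exp (t • log u)` (continuous functional calculus,
principal branch of the logarithm) is unitary and `1 - u_t` is compact. -/
theorem stmt5
    {H : Type*} [NormedAddCommGroup H] [InnerProductSpace ℂ H] [CompleteSpace H]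
    (u : H →L[ℂ] H)
    (hu : u ∈ unitary (H →L[ℂ] H))
    (hc : IsCompactOperator (⇑(1 - u)))
    (hm : (-1 : ℂ) ∉ spectrum ℂ u) :
    ∀ t ∈ Set.Icc (0 : ℝ) 1,
      cfc (fun z : ℂ => Complex.exp ((t : ℂ) * Complex.log z)) u ∈ unitary (H →L[ℂ] H) ∧
      IsCompactOperator
        (⇑(1 - cfc (fun z : ℂ => Complex.exp ((t : ℂ) * Complex.log z)) u)) := by
  intro t _
  have : IsStarNormal u := isStarNormal_of_mem_unitary hu
  have hslit : spectrum ℂ u ⊆ slitPlane :=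
    (Unitary.spectrum_subset_slitPlane_iff_norm_lt_two hu).2
      ((Unitary.norm_sub_one_lt_two_iff hu).2 hm)
  have hdslope := (continuousOn_dslope_exp_mul_log t).mono hslit
  refine ⟨(cfc_unitary_iff _ u (hf := hdslope.of_dslope)).2 fun z hz => ?_,
    hc.one_sub_cfc (by simp) hdslope⟩
  rw [RCLike.star_def, conj_mul', norm_exp_ofReal_mul_log_of_norm_eq_one t
    (spectrum.norm_eq_one_of_unitary hu hz)]
  norm_num
end

section
/- Let n ≥ 1 and let J_n ⊂ ℤ[x_1, …, x_n] be the ideal generated by the elementary symmetric polynomials σ_1, …, σ_n in x_1, …, x_n. Then for every k with 0 ≤ k ≤ n-1, the elementary symmetric polynomial σ_k(x_1, …, x_{n-1}) in the first n-1 variables satisfies σ_k(x_1, …, x_{n-1}) ≡ (-1)^k x_n^k (mod J_n). -/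
/-! Splitting off one variable `a` gives `σ_{k+1}(a, s) = σ_{k+1}(s) + a σ_k(s)`, so modulo an ideal
containing every `σ_j(a, s)` with `j ≥ 1` we get `σ_{k+1}(s) ≡ -a σ_k(s)`, and induction from
`σ_0 = 1` gives `σ_k(s) ≡ (-a)^k`. -/

open MvPolynomial

namespace Multiset

variable {R : Type*}

theorem esymm_cons_succ [CommSemiring R] (a : R) (s : Multiset R) (k : ℕ) :
    (a ::ₘ s).esymm (k + 1) = s.esymm (k + 1) + a * s.esymm k := by
  simp [esymm, powersetCard_cons, sum_map_mul_left]

theorem esymm_sub_neg_pow_mem [CommRing R] {I : Ideal R} {a : R} {s : Multiset R}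
    (h : ∀ j, 1 ≤ j → (a ::ₘ s).esymm j ∈ I) (k : ℕ) : s.esymm k - (-a) ^ k ∈ I := by
  induction k with
  | zero => simp [esymm]
  | succ k ih =>
    have hk : s.esymm (k + 1) - (-a) ^ (k + 1) =
        (a ::ₘ s).esymm (k + 1) - a * (s.esymm k - (-a) ^ k) := by
      rw [esymm_cons_succ]; ring
    rw [hk]
    exact I.sub_mem (h _ k.succ_pos) (I.mul_mem_left _ ih)

end Multiset

namespace MvPolynomial

variable {σ R : Type*} [Fintype σ] [DecidableEq σ] [CommRing R]

theorem esymm_erase_sub_neg_pow_mem {I : Ideal (MvPolynomial σ R)}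
    (h : ∀ j, 1 ≤ j → esymm σ R j ∈ I) (a : σ) (k : ℕ) :
    ∑ t ∈ Finset.powersetCard k (Finset.univ.erase a), ∏ i ∈ t, X i - (-X a) ^ k ∈ I := by
  rw [← Finset.esymm_map_val]
  refine Multiset.esymm_sub_neg_pow_mem (fun j hj => ?_) k
  rw [← Multiset.map_cons, Finset.erase_val, Multiset.cons_erase (Finset.mem_univ a),
    Finset.esymm_map_val]
  exact h j hj

theorem esymm_mem_span_esymm_Icc (n j : ℕ) (hj : 1 ≤ j) :
    esymm (Fin n) R j ∈ Ideal.span (esymm (Fin n) R '' Set.Icc 1 n) := by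
  rcases le_or_gt j n with hjn | hjn
  · exact Ideal.subset_span ⟨j, ⟨hj, hjn⟩, rfl⟩
  · rw [esymm, Finset.powersetCard_eq_empty.2 (by simpa using hjn), Finset.sum_empty]
    exact Ideal.zero_mem _

end MvPolynomial

theorem stmt9_general (n : ℕ) (k : ℕ) :
    (∑ t ∈ Finset.powersetCard k ((Finset.univ : Finset (Fin (n + 1))).erase (Fin.last n)),
        ∏ i ∈ t, (X i : MvPolynomial (Fin (n + 1)) ℤ))
      - (-1) ^ k * (X (Fin.last n)) ^ k
    ∈ Ideal.span ((fun j => (esymm (Fin (n + 1)) ℤ j : MvPolynomial (Fin (n + 1)) ℤ)) ''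
        Set.Icc 1 (n + 1)) := by
  rw [← mul_pow, neg_one_mul]
  exact esymm_erase_sub_neg_pow_mem (esymm_mem_span_esymm_Icc (n + 1)) _ k

/-- In `ℤ[x_1, …, x_{n+1}]`, modulo the ideal `J` generated by the elementary symmetric
polynomials `σ_1, …, σ_{n+1}` of all the variables, the `k`-th elementary symmetric
polynomial of the first `n` variables is congruent to `(-1)^k x_{n+1}^k`, for `0 ≤ k ≤ n`. -/
theorem stmt9 (n : ℕ) (k : ℕ) (hk : k ≤ n) :
    (∑ t ∈ Finset.powersetCard k ((Finset.univ : Finset (Fin (n + 1))).erase (Fin.last n)),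
        ∏ i ∈ t, (X i : MvPolynomial (Fin (n + 1)) ℤ))
      - (-1) ^ k * (X (Fin.last n)) ^ k
    ∈ Ideal.span ((fun j => (esymm (Fin (n + 1)) ℤ j : MvPolynomial (Fin (n + 1)) ℤ)) ''
        Set.Icc 1 (n + 1)) :=
  stmt9_general n k
end

section
/- Let n ≥ 1 and let J_n ⊂ ℤ[x_1, …, x_n] be the ideal generated by the elementary symmetric polynomials σ_1, …, σ_n of x_1, …, x_n. Then ∏_{j=1}^{n-1} (x_n - x_j) ≡ n·x_n^{n-1} (mod J_n). -/
open MvPolynomial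

theorem stmt10_vieta (n : ℕ) :
    (∏ i : Fin (n + 1), (Polynomial.X - Polynomial.C (X i : MvPolynomial (Fin (n + 1)) ℤ)))
      = ∑ j ∈ Finset.range (n + 2),
          (-1) ^ j * (Polynomial.C (esymm (Fin (n + 1)) ℤ j) * Polynomial.X ^ (n + 1 - j)) := by
  have h := Multiset.prod_X_sub_X_eq_sum_esymm
      ((Finset.univ.val).map (fun i : Fin (n+1) => (X i : MvPolynomial (Fin (n + 1)) ℤ)))
  simp only [Multiset.map_map, Function.comp] at h
  rw [Finset.prod_eq_multiset_prod, h]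
  simp [Finset.esymm_map_val, MvPolynomial.esymm_eq_multiset_esymm]

theorem stmt10_deriv (n : ℕ) :
    (∏ j : Fin n, ((X (Fin.last n) : MvPolynomial (Fin (n + 1)) ℤ) - X (Fin.castSucc j)))
      = Polynomial.eval (X (Fin.last n))
          (Polynomial.derivative
            (∏ i : Fin (n + 1), (Polynomial.X - Polynomial.C (X i : MvPolynomial (Fin (n + 1)) ℤ)))) := by
  rw [Fin.prod_univ_castSucc, Polynomial.derivative_mul]
  simp [Polynomial.eval_prod]

/-- In `ℤ[x_1, …, x_{n+1}]`, modulo the ideal generated by the elementary symmetric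
polynomials `σ_1, …, σ_{n+1}`, one has `∏_{j=1}^{n} (x_{n+1} - x_j) ≡ (n+1)·x_{n+1}^n`. -/
theorem stmt10 (n : ℕ) :
    (∏ j : Fin n, ((X (Fin.last n) : MvPolynomial (Fin (n + 1)) ℤ) - X (Fin.castSucc j)))
      - C ((n : ℤ) + 1) * (X (Fin.last n)) ^ n
    ∈ Ideal.span ((fun j => (esymm (Fin (n + 1)) ℤ j : MvPolynomial (Fin (n + 1)) ℤ)) ''
        Set.Icc 1 (n + 1)) := by
  rw [stmt10_deriv, stmt10_vieta, Polynomial.derivative_sum]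
  simp only [Polynomial.derivative_mul, Polynomial.derivative_C, Polynomial.derivative_X_pow,
    Polynomial.derivative_pow, Polynomial.derivative_X, Polynomial.derivative_neg,
    Polynomial.derivative_one, neg_zero, zero_mul, mul_zero, mul_one, zero_add, add_zero,
    smul_zero, Polynomial.eval_finset_sum, Polynomial.eval_mul, Polynomial.eval_pow,
    Polynomial.eval_neg, Polynomial.eval_one, Polynomial.eval_natCast, Polynomial.eval_C,
    Polynomial.eval_X]
  rw [Finset.sum_range_succ']
  have h0 : ((-1 : MvPolynomial (Fin (n+1)) ℤ) ^ 0 *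
      (esymm (Fin (n+1)) ℤ 0 *
        (((n + 1 - 0 : ℕ) : MvPolynomial (Fin (n+1)) ℤ) * X (Fin.last n) ^ (n + 1 - 0 - 1))))
      = C ((n : ℤ) + 1) * (X (Fin.last n)) ^ n := by
    simp [esymm_zero]
  rw [h0, add_sub_cancel_right]
  refine Ideal.sum_mem _ fun k hk => ?_
  exact Ideal.mul_mem_left _ _ (Ideal.mul_mem_right _ _ (Ideal.subset_span
    ⟨k + 1, ⟨Nat.le_add_left 1 k, by simpa using Nat.succ_le_succ (Finset.mem_range_succ_iff.mp hk)⟩, rfl⟩))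
end

section
/- The Vandermonde determinant d_n(x_1, …, x_n) = ∏_{1 ≤ j < i ≤ n}(x_i - x_j) does not lie in the ideal J_n ⊂ ℤ[x_1, …, x_n] generated by the elementary symmetric polynomials σ_1, …, σ_n, for any n ≥ 2. -/
/-!
Let `δ = (0, 1, …, n-1)`. The functional `altCoeff f = ∑_π sign π • [x^(δ ∘ π)] f` takes the
value `n!` on `d_n = ∑_π sign π • x^(δ ∘ π)`, but vanishes on every `x^α σ_k` with `k ≥ 1`, hence
on `J_n`. Indeed, if two entries of `α` agree, `x^α σ_k` is invariant under the transposition of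
the two variables, which changes the sign of `altCoeff`. If the entries of `α` are distinct, then
`|α| ≥ 0 + 1 + ⋯ + (n-1) = |δ|`, so `x^α σ_k` is homogeneous of degree larger than `|δ|`.
-/

open MvPolynomial Finset Equiv

theorem Nat.sum_range_card_le_sum (s : Finset ℕ) : ∑ i ∈ range #s, i ≤ ∑ x ∈ s, x := by
  induction s using Finset.induction_on_max with
  | empty => simp
  | insert a s hlt ih =>
    have has : a ∉ s := fun h => (hlt a h).false
    have hcard : #s ≤ a := by
      simpa using card_le_card fun x hx => mem_range.2 (hlt x hx)
    rw [card_insert_of_notMem has, sum_range_succ, sum_insert has]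
    omega

theorem Nat.sum_range_card_le_sum_of_injective {ι : Type*} [Fintype ι] {d : ι → ℕ}
    (hd : Function.Injective d) : ∑ i ∈ range (Fintype.card ι), i ≤ ∑ i, d i := by
  simpa [Finset.card_image_of_injective _ hd, sum_image hd.injOn] using
    Nat.sum_range_card_le_sum (univ.image d)

namespace MvPolynomial

variable {R : Type*} [CommRing R] {n : ℕ}

theorem isHomogeneous_esymm (σ : Type*) [Fintype σ] (k : ℕ) : (esymm σ R k).IsHomogeneous k :=
  IsHomogeneous.sum _ _ _ fun t ht => by
    simpa [(mem_powersetCard.1 ht).2] using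
      IsHomogeneous.prod t X (fun _ => 1) fun i _ => isHomogeneous_X R i

noncomputable def staircase (σ : Perm (Fin n)) : Fin n →₀ ℕ :=
  Finsupp.equivFunOnFinite.symm fun i => σ i

@[simp] theorem staircase_apply (σ : Perm (Fin n)) (i : Fin n) : staircase σ i = σ i := rfl

theorem staircase_injective : Function.Injective (staircase (n := n)) := fun _ _ h =>
  Perm.ext fun i => Fin.ext (DFunLike.congr_fun h i)

theorem degree_staircase (σ : Perm (Fin n)) : (staircase σ).degree = ∑ i ∈ range n, i := by
  rw [Finsupp.degree_eq_sum, ← Fin.sum_univ_eq_sum_range]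
  exact Equiv.sum_comp σ (fun i : Fin n => (i : ℕ))

theorem staircase_mul_inv (σ π : Perm (Fin n)) :
    staircase (σ * π⁻¹) = (staircase σ).mapDomain π := by
  ext i
  simp [Finsupp.mapDomain_equiv_apply]

noncomputable def altCoeff : MvPolynomial (Fin n) R →ₗ[R] R :=
  ∑ σ : Perm (Fin n), Perm.sign σ • lcoeff R (staircase σ)

theorem altCoeff_apply (f : MvPolynomial (Fin n) R) :
    altCoeff f = ∑ σ : Perm (Fin n), Perm.sign σ • coeff (staircase σ) f := by
  simp [altCoeff]

theorem altCoeff_rename (π : Perm (Fin n)) (f : MvPolynomial (Fin n) R) :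
    altCoeff (rename π f) = Perm.sign π • altCoeff f := by
  simp only [altCoeff_apply, smul_sum]
  rw [← Equiv.sum_comp (Equiv.mulRight π⁻¹)]
  refine sum_congr rfl fun σ _ => ?_
  rw [Equiv.coe_mulRight, staircase_mul_inv, coeff_rename_mapDomain _ π.injective, Perm.sign_mul,
    Perm.sign_inv, mul_comm, mul_smul]

theorem altCoeff_eq_zero_of_rename_swap [NoZeroDivisors R] [CharZero R] {p q : Fin n}
    (hpq : p ≠ q) {f : MvPolynomial (Fin n) R} (hf : rename (swap p q) f = f) :
    altCoeff f = 0 := by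
  have := altCoeff_rename (swap p q) f
  rwa [hf, Perm.sign_swap hpq, Units.neg_smul, one_smul, CharZero.eq_neg_self_iff] at this

theorem altCoeff_eq_zero_of_isHomogeneous {f : MvPolynomial (Fin n) R} {m : ℕ}
    (hf : f.IsHomogeneous m) (hm : m ≠ ∑ i ∈ range n, i) : altCoeff f = 0 := by
  rw [altCoeff_apply]
  refine sum_eq_zero fun σ _ => ?_
  rw [hf.coeff_eq_zero (by rw [degree_staircase]; exact hm.symm), smul_zero]

theorem mapDomain_swap_eq_self {d : Fin n →₀ ℕ} {p q : Fin n} (h : d p = d q) :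
    d.mapDomain (swap p q) = d := by
  ext i
  rw [Finsupp.mapDomain_equiv_apply, symm_swap, swap_apply_def]
  split_ifs <;> simp_all

theorem altCoeff_monomial_mul_esymm [NoZeroDivisors R] [CharZero R] (d : Fin n →₀ ℕ) (c : R)
    {k : ℕ} (hk : k ≠ 0) : altCoeff (monomial d c * esymm (Fin n) R k) = 0 := by
  by_cases hd : Function.Injective d
  · refine altCoeff_eq_zero_of_isHomogeneous
      ((isHomogeneous_monomial c rfl).mul (isHomogeneous_esymm _ k)) ?_
    have := Nat.sum_range_card_le_sum_of_injective hd
    rw [Fintype.card_fin] at this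
    rw [Finsupp.degree_eq_sum]
    omega
  · obtain ⟨p, q, hdpq, hpq⟩ := Function.not_injective_iff.1 hd
    refine altCoeff_eq_zero_of_rename_swap hpq ?_
    rw [map_mul, rename_monomial, mapDomain_swap_eq_self hdpq, esymm_isSymmetric _ _ k (swap p q)]

theorem altCoeff_mul_esymm [NoZeroDivisors R] [CharZero R] (g : MvPolynomial (Fin n) R)
    {k : ℕ} (hk : k ≠ 0) : altCoeff (g * esymm (Fin n) R k) = 0 := by
  induction g using MvPolynomial.induction_on' with
  | monomial d c => exact altCoeff_monomial_mul_esymm d c hk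
  | add f g hf hg => rw [add_mul, map_add, hf, hg, add_zero]

theorem altCoeff_eq_zero_of_mem_span_esymm [NoZeroDivisors R] [CharZero R] {K : Set ℕ}
    (hK : 0 ∉ K) {f : MvPolynomial (Fin n) R} (hf : f ∈ Ideal.span (esymm (Fin n) R '' K)) :
    altCoeff f = 0 := by
  obtain ⟨c, hc, rfl⟩ := Submodule.mem_span_set.1 hf
  rw [Finsupp.sum, map_sum]
  refine sum_eq_zero fun e he => ?_
  obtain ⟨k, hk, rfl⟩ := hc he
  exact altCoeff_mul_esymm _ (ne_of_mem_of_not_mem hk hK)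

theorem det_vandermonde_X : (Matrix.vandermonde (X : Fin n → MvPolynomial (Fin n) R)).det =
    ∑ σ : Perm (Fin n), Perm.sign σ • monomial (staircase σ) 1 := by
  rw [← Matrix.det_transpose, Matrix.det_apply]
  refine sum_congr rfl fun σ _ => ?_
  rw [monomial_eq, C_1, one_mul, Finsupp.prod_fintype _ _ fun i => pow_zero _]
  simp

theorem altCoeff_monomial_staircase (σ : Perm (Fin n)) :
    altCoeff (monomial (staircase σ) (1 : R)) = Perm.sign σ • 1 := by
  simp [altCoeff_apply, coeff_monomial, staircase_injective.eq_iff]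

theorem altCoeff_det_vandermonde_X :
    altCoeff (Matrix.vandermonde (X : Fin n → MvPolynomial (Fin n) R)).det = n.factorial := by
  simp [det_vandermonde_X, altCoeff_monomial_staircase, smul_smul, Fintype.card_perm]

theorem prod_sub_X_eq_det_vandermonde :
    ∏ i : Fin n, ∏ j ∈ univ.filter (· < i), (X i - X j : MvPolynomial (Fin n) R) =
      (Matrix.vandermonde X).det := by
  rw [Matrix.det_vandermonde]
  exact prod_comm' fun i j => by simp

theorem prod_sub_X_notMem_span_esymm [NoZeroDivisors R] [CharZero R] {K : Set ℕ} (hK : 0 ∉ K) :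
    ∏ i : Fin n, ∏ j ∈ univ.filter (· < i), (X i - X j : MvPolynomial (Fin n) R) ∉
      Ideal.span (esymm (Fin n) R '' K) := fun h => by
  have := altCoeff_eq_zero_of_mem_span_esymm hK h
  rw [prod_sub_X_eq_det_vandermonde, altCoeff_det_vandermonde_X] at this
  exact Nat.cast_ne_zero.2 n.factorial_ne_zero this

end MvPolynomial

theorem stmt13_general (n : ℕ) :
    (∏ i : Fin n, ∏ j ∈ Finset.univ.filter (fun j => j < i),
        ((X i : MvPolynomial (Fin n) ℤ) - X j))
    ∉ Ideal.span ((fun j => (esymm (Fin n) ℤ j : MvPolynomial (Fin n) ℤ)) ''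
        Set.Icc 1 n) :=
  prod_sub_X_notMem_span_esymm (by simp)

/-- For `n ≥ 2`, the Vandermonde product `∏_{j<i}(x_i - x_j)` does not lie in the ideal of
`ℤ[x_1, …, x_n]` generated by the elementary symmetric polynomials `σ_1, …, σ_n`. -/
theorem stmt13 (n : ℕ) (hn : 2 ≤ n) :
    (∏ i : Fin n, ∏ j ∈ Finset.univ.filter (fun j => j < i),
        ((X i : MvPolynomial (Fin n) ℤ) - X j))
    ∉ Ideal.span ((fun j => (esymm (Fin n) ℤ j : MvPolynomial (Fin n) ℤ)) ''
        Set.Icc 1 n) :=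
  stmt13_general n
end
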